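/- arXiv:0707.1714 — 4 statements merged into one kernel-verified Lean document; each statement's English description precedes it below -/
import Mathlib

section
/- Let A be an n×m real matrix of rank d, let p ∈ [1,∞), and let q be its dual exponent. Then there exists an (α,β,p)-well-conditioned basis U for the column space of A such that: if p < 2 then α = d^{1/p+1/2} and β = 1; if p = 2 then α = d^{1/2} and β = 1; and if p > 2 then α = d^{1/p+1/2} and β = d^{1/q−1/2}. -/
open scoped BigOperators

/-- The entrywise `p`-norm of a vector: `(∑ i, |v i| ^ p) ^ (1/p)`. -/
noncomputable def pnorm (p : ℝ) {n : ℕ} (v : Fin n → ℝ) : ℝ :=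
  (∑ i, |v i| ^ p) ^ (1 / p)

/-- The dual norm of the `p`-norm: the max-norm if `p = 1`, else the `p/(p-1)`-norm. -/
noncomputable def qnorm (p : ℝ) {n : ℕ} (v : Fin n → ℝ) : ℝ :=
  if p = 1 then ⨆ i, |v i| else pnorm (p / (p - 1)) v

/-- The entrywise `p`-norm of a matrix. -/
noncomputable def mpnorm (p : ℝ) {n d : ℕ} (M : Matrix (Fin n) (Fin d) ℝ) : ℝ :=
  (∑ i, ∑ j, |M i j| ^ p) ^ (1 / p)

/-- `U` is an `(α, β, p)`-well-conditioned basis for the column space of `A`. -/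
def IsWCB (p α β : ℝ) {n m d : ℕ} (A : Matrix (Fin n) (Fin m) ℝ)
    (U : Matrix (Fin n) (Fin d) ℝ) : Prop :=
  LinearMap.range U.mulVecLin = LinearMap.range A.mulVecLin ∧
  mpnorm p U ≤ α ∧
  ∀ z : Fin d → ℝ, qnorm p z ≤ β * pnorm p (U.mulVec z)

/-- `S : Ω → Matrix` is a random `n × n` diagonal sampling matrix with probabilities `pr`:
its diagonal entries are mutually independent, with `S ω i i = (pr i) ^ (-1/p)` with
probability `pr i` and `S ω i i = 0` with probability `1 - pr i`. -/
structure IsSamplingMatrix {Ω : Type} [MeasurableSpace Ω] (μ : MeasureTheory.Measure Ω)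
    (p : ℝ) {n : ℕ} (pr : Fin n → ℝ) (S : Ω → Matrix (Fin n) (Fin n) ℝ) : Prop where
  offdiag : ∀ ω i j, i ≠ j → S ω i j = 0
  meas : ∀ i, Measurable fun ω => S ω i i
  prob_val : ∀ i, μ {ω | S ω i i = (pr i) ^ (-(1 / p))} = ENNReal.ofReal (pr i)
  prob_zero : ∀ i, μ {ω | S ω i i = 0} = ENNReal.ofReal (1 - pr i)
  indep : ProbabilityTheory.iIndepFun (fun i ω => S ω i i) μ

/-! For `p ≠ 2` take an Auerbach basis of the column space, viewed inside `ℓ^p`: among all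
families of unit vectors choose one maximizing `|det|`. By Cramer's rule its coordinate
functionals then have norm one, so the matrix `U` of this basis has `|||U|||_p = d^{1/p}` and
`|z_j| ≤ ‖Uz‖_p`, whence `‖z‖_q ≤ d^{1/q} ‖Uz‖_p`. Rescaling `U` by `d^s` moves a factor `d^s`
from `β` to `α`; `s = 1/q` gives the case `p < 2` and `s = 1/2` the case `p > 2`. For `p = 2`
an orthonormal basis is an isometry, which gives `α = d^{1/2}` and `β = 1`. -/

open Module
open scoped ENNReal Matrix

section Norms

variable {p : ℝ} {n d N : ℕ}

lemma pnorm_nonneg (v : Fin N → ℝ) : 0 ≤ pnorm p v := by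
  unfold pnorm; positivity

lemma pnorm_zero (hp : p ≠ 0) : pnorm p (0 : Fin N → ℝ) = 0 := by
  simp [pnorm, Real.zero_rpow hp, Real.zero_rpow (inv_ne_zero hp)]

lemma pnorm_rpow (hp : p ≠ 0) (v : Fin N → ℝ) : pnorm p v ^ p = ∑ i, |v i| ^ p := by
  rw [pnorm, one_div, Real.rpow_inv_rpow (by positivity) hp]

lemma pnorm_toReal_eq_norm {q : ℝ≥0∞} (hq : 0 < q.toReal) (v : Fin N → ℝ) :
    pnorm q.toReal v = ‖WithLp.toLp q v‖ := by
  simp [pnorm, PiLp.norm_eq_sum hq]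

lemma rpow_sum_abs_const_mul_rpow {ι : Type*} [Fintype ι] (hp : p ≠ 0) (c : ℝ) (f : ι → ℝ) :
    (∑ i, |c * f i| ^ p) ^ (1 / p) = |c| * (∑ i, |f i| ^ p) ^ (1 / p) := by
  simp_rw [abs_mul, Real.mul_rpow (abs_nonneg c) (abs_nonneg _), ← Finset.mul_sum]
  rw [Real.mul_rpow (by positivity) (by positivity), one_div, Real.rpow_rpow_inv (abs_nonneg c) hp]

lemma pnorm_smul (hp : p ≠ 0) (c : ℝ) (v : Fin N → ℝ) : pnorm p (c • v) = |c| * pnorm p v :=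
  rpow_sum_abs_const_mul_rpow hp c v

lemma mpnorm_smul (hp : p ≠ 0) (c : ℝ) (M : Matrix (Fin n) (Fin d) ℝ) :
    mpnorm p (c • M) = |c| * mpnorm p M := by
  simpa only [mpnorm, Matrix.smul_apply, smul_eq_mul, ← Fintype.sum_prod_type'] using
    rpow_sum_abs_const_mul_rpow hp c fun x : Fin n × Fin d => M x.1 x.2

lemma mpnorm_eq_of_pnorm_col_eq_one (hp : p ≠ 0) {M : Matrix (Fin n) (Fin d) ℝ}
    (h : ∀ j, pnorm p (fun i => M i j) = 1) : mpnorm p M = (d : ℝ) ^ (1 / p) := by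
  have hcol (j : Fin d) : ∑ i, |M i j| ^ p = 1 := by
    rw [← pnorm_rpow hp, h, Real.one_rpow]
  simp [mpnorm, Finset.sum_comm (γ := Fin n), hcol]

lemma qnorm_zero (hp : p ≠ 0) : qnorm p (0 : Fin N → ℝ) = 0 := by
  unfold qnorm
  split_ifs with h1
  · simp
  · exact pnorm_zero (div_ne_zero hp (sub_ne_zero.2 h1))

lemma qnorm_le_of_abs_le (hp : 1 ≤ p) {z : Fin N → ℝ} {M : ℝ} (hM₀ : 0 ≤ M)
    (hM : ∀ j, |z j| ≤ M) : qnorm p z ≤ (N : ℝ) ^ (1 - 1 / p) * M := by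
  rcases hp.eq_or_lt with rfl | hp
  · simpa [qnorm] using Real.iSup_le hM hM₀
  set q := p / (p - 1)
  have hq : 0 < q := div_pos (by linarith) (by linarith)
  have hq' : 1 / q = 1 - 1 / p := by rw [one_div_div]; field_simp
  rw [qnorm, if_neg hp.ne', ← hq', ← Real.rpow_rpow_inv hM₀ hq.ne', ← one_div,
    ← Real.mul_rpow (by positivity) (by positivity)]
  refine Real.rpow_le_rpow (by positivity) ?_ (by positivity)
  simpa [q] using Finset.sum_le_sum (s := Finset.univ) fun j _ =>
    Real.rpow_le_rpow (abs_nonneg (z j)) (hM j) hq.le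

end Norms

theorem exists_auerbach_basis {E : Type*} [NormedAddCommGroup E] [NormedSpace ℝ E]
    [FiniteDimensional ℝ E] {ι : Type*} [Fintype ι] [DecidableEq ι] (e : Basis ι ℝ E) :
    ∃ b : Basis ι ℝ E, (∀ i, ‖b i‖ = 1) ∧ ∀ i x, |b.coord i x| ≤ ‖x‖ := by
  set S : Set (ι → E) := Set.univ.pi fun _ => Metric.sphere 0 1
  have hS : IsCompact S := isCompact_univ_pi fun _ => isCompact_sphere 0 1
  have hdet : Continuous fun v => |e.det v| := by
    have hrepr : Continuous e.equivFun := e.equivFun.toLinearMap.continuous_of_finiteDimensional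
    simp_rw [e.det_apply]
    exact (Continuous.matrix_det (continuous_pi fun i => continuous_pi fun j =>
      (continuous_apply i).comp (hrepr.comp (continuous_apply j)))).abs
  have hsphere {x : E} (hx : x ≠ 0) : (‖x‖⁻¹ : ℝ) • x ∈ Metric.sphere (0 : E) 1 := by
    simpa using norm_smul_inv_norm (𝕜 := ℝ) hx
  set v₀ : ι → E := fun i => (‖e i‖⁻¹ : ℝ) • e i
  obtain ⟨v, hvS, hvmax⟩ :=
    hS.exists_isMaxOn ⟨v₀, fun i _ => hsphere (e.ne_zero i)⟩ hdet.continuousOn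
  have hv₀det : e.det v₀ ≠ 0 := by
    simpa [v₀, e.det.map_smul_univ, e.det_self] using
      Finset.prod_ne_zero_iff.2 fun i _ => norm_ne_zero_iff.2 (e.ne_zero i)
  have hvdet : 0 < |e.det v| :=
    (abs_pos.2 hv₀det).trans_le (hvmax fun i _ => hsphere (e.ne_zero i))
  obtain ⟨hli, hsp⟩ := e.is_basis_iff_det.2 (isUnit_iff_ne_zero.2 (abs_pos.1 hvdet))
  refine ⟨Basis.mk hli hsp.ge, fun i => by simpa using hvS i trivial, fun i x => ?_⟩
  rcases eq_or_ne x 0 with rfl | hx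
  · rw [map_zero, abs_zero, norm_zero]
  have hcramer : e.det v * (Basis.mk hli hsp.ge).coord i x = e.det (Function.update v i x) :=
    LinearMap.congr_fun (e.det_smul_mk_coord_eq_det_update hli hsp.ge i) x
  have hmax : |e.det (Function.update v i ((‖x‖⁻¹ : ℝ) • x))| ≤ |e.det v| := hvmax fun k _ => by
    rcases eq_or_ne k i with rfl | hk
    · simpa using hsphere hx
    · simpa [hk] using hvS k trivial
  rw [e.det.map_update_smul, ← hcramer, smul_eq_mul, abs_mul, abs_mul, abs_inv, abs_norm,
    inv_mul_le_iff₀ (norm_pos_iff.2 hx), mul_comm ‖x‖] at hmax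
  exact le_of_mul_le_mul_left hmax hvdet

section ColumnSpace

variable {n m d : ℕ} {q : ℝ≥0∞}

noncomputable def colSpaceLp (q : ℝ≥0∞) (A : Matrix (Fin n) (Fin m) ℝ) :
    Submodule ℝ (WithLp q (Fin n → ℝ)) :=
  (LinearMap.range A.mulVecLin).map (WithLp.linearEquiv q ℝ (Fin n → ℝ)).symm.toLinearMap

lemma finrank_colSpaceLp (A : Matrix (Fin n) (Fin m) ℝ) : finrank ℝ (colSpaceLp q A) = A.rank :=
  LinearEquiv.finrank_map_eq (WithLp.linearEquiv q ℝ (Fin n → ℝ)).symm _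

noncomputable def basisMatrix {V : Submodule ℝ (WithLp q (Fin n → ℝ))} (b : Basis (Fin d) ℝ V) :
    Matrix (Fin n) (Fin d) ℝ :=
  Matrix.of fun i j => (b j : WithLp q (Fin n → ℝ)) i

lemma basisMatrix_mulVec {V : Submodule ℝ (WithLp q (Fin n → ℝ))} (b : Basis (Fin d) ℝ V)
    (z : Fin d → ℝ) :
    basisMatrix b *ᵥ z = WithLp.ofLp (b.equivFun.symm z : WithLp q (Fin n → ℝ)) := by
  ext i
  simp [basisMatrix, Matrix.mulVec, dotProduct, b.equivFun_symm_apply, mul_comm]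

lemma range_basisMatrix {A : Matrix (Fin n) (Fin m) ℝ} (b : Basis (Fin d) ℝ (colSpaceLp q A)) :
    LinearMap.range (basisMatrix b).mulVecLin = LinearMap.range A.mulVecLin := by
  have hU : (basisMatrix b).mulVecLin = (WithLp.linearEquiv q ℝ (Fin n → ℝ)).toLinearMap ∘ₗ
      (colSpaceLp q A).subtype ∘ₗ b.equivFun.symm.toLinearMap :=
    LinearMap.ext (basisMatrix_mulVec b)
  rw [hU, LinearMap.range_comp, LinearMap.range_comp, LinearEquiv.range, Submodule.map_top,
    Submodule.range_subtype]
  exact (Submodule.map_symm_eq_iff _).1 rfl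

theorem isWCB_basisMatrix [Fact (1 ≤ q)] (hq : q ≠ ∞) {A : Matrix (Fin n) (Fin m) ℝ}
    (b : Basis (Fin d) ℝ (colSpaceLp q A)) (hb : ∀ j, ‖b j‖ = 1) {β : ℝ}
    (hβ : ∀ z, qnorm q.toReal z ≤ β * ‖b.equivFun.symm z‖) :
    IsWCB q.toReal ((d : ℝ) ^ (1 / q.toReal)) β A (basisMatrix b) := by
  have hq₀ : 0 < q.toReal :=
    ENNReal.toReal_pos (zero_lt_one.trans_le Fact.out).ne' hq
  refine ⟨range_basisMatrix b, le_of_eq (mpnorm_eq_of_pnorm_col_eq_one hq₀.ne' fun j => ?_),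
    fun z => ?_⟩
  · rw [← hb j, pnorm_toReal_eq_norm hq₀]
    rfl
  · rw [basisMatrix_mulVec, pnorm_toReal_eq_norm hq₀]
    exact hβ z

end ColumnSpace

section WellConditioned

variable {n m d : ℕ} {p α β : ℝ} {A : Matrix (Fin n) (Fin m) ℝ}

theorem IsWCB.mono {U : Matrix (Fin n) (Fin d) ℝ} {α' β' : ℝ} (h : IsWCB p α β A U)
    (hα : α ≤ α') (hβ : β ≤ β') : IsWCB p α' β' A U :=
  ⟨h.1, h.2.1.trans hα, fun z =>
    (h.2.2 z).trans (mul_le_mul_of_nonneg_right hβ (pnorm_nonneg _))⟩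

theorem IsWCB.smul {U : Matrix (Fin n) (Fin d) ℝ} {c : ℝ} (hp : p ≠ 0) (h : IsWCB p α β A U)
    (hc : 0 < c) : IsWCB p (c * α) (β / c) A (c • U) := by
  obtain ⟨hrange, hα, hβ⟩ := h
  refine ⟨?_, ?_, fun z => ?_⟩
  · have hcU : (c • U).mulVecLin = c • U.mulVecLin :=
      LinearMap.ext fun z => Matrix.smul_mulVec c U z
    rw [hcU, LinearMap.range_smul _ _ hc.ne', hrange]
  · rw [mpnorm_smul hp, abs_of_pos hc]
    exact mul_le_mul_of_nonneg_left hα hc.le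
  · rw [Matrix.smul_mulVec, pnorm_smul hp, abs_of_pos hc, ← mul_assoc,
      div_mul_cancel₀ _ hc.ne']
    exact hβ z

theorem isWCB_of_rank_eq_zero (hp : p ≠ 0) (hA : A.rank = 0) (hα : 0 ≤ α)
    (U : Matrix (Fin n) (Fin 0) ℝ) : IsWCB p α β A U := by
  refine ⟨?_, ?_, fun z => ?_⟩
  · rw [Submodule.finrank_eq_zero.1 hA, LinearMap.range_eq_bot]
    exact Subsingleton.elim _ _
  · simpa [mpnorm, Real.zero_rpow (inv_ne_zero hp)] using hα
  · rw [Subsingleton.elim z 0, qnorm_zero hp, Matrix.mulVec_zero, pnorm_zero hp, mul_zero]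

theorem exists_isWCB_auerbach (hp : 1 ≤ p) (hrank : A.rank = d) :
    ∃ U : Matrix (Fin n) (Fin d) ℝ, IsWCB p ((d : ℝ) ^ (1 / p)) ((d : ℝ) ^ (1 - 1 / p)) A U := by
  have : Fact (1 ≤ ENNReal.ofReal p) := ⟨by simpa using hp⟩
  have hp' : (ENNReal.ofReal p).toReal = p := ENNReal.toReal_ofReal (by linarith)
  obtain ⟨b, hb_norm, hb_coord⟩ :=
    exists_auerbach_basis (finBasisOfFinrankEq ℝ (colSpaceLp (ENNReal.ofReal p) A)
      ((finrank_colSpaceLp A).trans hrank))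
  have hU := isWCB_basisMatrix ENNReal.ofReal_ne_top b hb_norm fun z => by
    rw [hp']
    refine qnorm_le_of_abs_le hp (norm_nonneg _) fun j => ?_
    simpa only [b.coord_equivFun_symm] using hb_coord j (b.equivFun.symm z)
  rw [hp'] at hU
  exact ⟨_, hU⟩

theorem exists_isWCB_rpow (hp : 1 ≤ p) (hrank : A.rank = d) (hd : 0 < d) (s : ℝ) :
    ∃ U : Matrix (Fin n) (Fin d) ℝ,
      IsWCB p ((d : ℝ) ^ (s + 1 / p)) ((d : ℝ) ^ (1 - 1 / p - s)) A U := by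
  obtain ⟨U, hU⟩ := exists_isWCB_auerbach hp hrank
  have hd' : (0 : ℝ) < d := Nat.cast_pos.2 hd
  rw [Real.rpow_add hd', Real.rpow_sub hd']
  exact ⟨_, hU.smul (by linarith) (Real.rpow_pos_of_pos hd' s)⟩

theorem exists_isWCB_two (hrank : A.rank = d) :
    ∃ U : Matrix (Fin n) (Fin d) ℝ, IsWCB 2 ((d : ℝ) ^ ((1 : ℝ) / 2)) 1 A U := by
  let b := (stdOrthonormalBasis ℝ (colSpaceLp 2 A)).reindex
    (finCongr ((finrank_colSpaceLp A).trans hrank))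
  have hU := isWCB_basisMatrix (q := 2) ENNReal.ofNat_ne_top b.toBasis
    (by simp [b.norm_eq_one]) (β := 1) fun z => by
      have hz : b.toBasis.equivFun.symm z = b.repr.symm (WithLp.toLp 2 z) := by
        rw [← b.sum_repr_symm, b.toBasis.equivFun_symm_apply]
        simp
      refine le_of_eq ?_
      calc qnorm (2 : ℝ≥0∞).toReal z = pnorm (2 : ℝ≥0∞).toReal z := by norm_num [qnorm]
        _ = ‖WithLp.toLp 2 z‖ := pnorm_toReal_eq_norm (by norm_num) z
        _ = 1 * ‖b.toBasis.equivFun.symm z‖ := by rw [one_mul, hz, LinearIsometryEquiv.norm_map]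
  rw [ENNReal.toReal_ofNat] at hU
  exact ⟨_, hU⟩

end WellConditioned

/-- **Existence of well-conditioned bases.**
Let `A` be an `n × m` real matrix of rank `d` and `p ∈ [1, ∞)`.  Then there exists an
`(α, β, p)`-well-conditioned basis `U` for the column space of `A`, where:
if `p < 2` then `α = d^(1/p + 1/2)` and `β = 1`; if `p = 2` then `α = d^(1/2)` and `β = 1`;
and if `p > 2` then `α = d^(1/p + 1/2)` and `β = d^(1/q - 1/2)` with `1/q = 1 - 1/p`. -/
theorem well_conditioned_basis_exists {n m d : ℕ} (A : Matrix (Fin n) (Fin m) ℝ) (p : ℝ)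
    (hp : 1 ≤ p) (hrank : A.rank = d) :
    ∃ U : Matrix (Fin n) (Fin d) ℝ,
      (p < 2 → IsWCB p ((d : ℝ) ^ (1 / p + 1 / 2)) 1 A U) ∧
      (p = 2 → IsWCB p ((d : ℝ) ^ ((1 : ℝ) / 2)) 1 A U) ∧
      (2 < p → IsWCB p ((d : ℝ) ^ (1 / p + 1 / 2)) ((d : ℝ) ^ ((1 - 1 / p) - 1 / 2)) A U) := by
  have hp₀ : p ≠ 0 := by positivity
  rcases Nat.eq_zero_or_pos d with rfl | hd
  · have h (α β : ℝ) : IsWCB p (((0 : ℕ) : ℝ) ^ α) β A 0 :=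
      isWCB_of_rank_eq_zero hp₀ hrank (by positivity) 0
    exact ⟨0, fun _ => h _ _, fun _ => h _ _, fun _ => h _ _⟩
  rcases lt_trichotomy p 2 with hp2 | rfl | hp2
  · obtain ⟨U, hU⟩ := exists_isWCB_rpow hp hrank hd (1 - 1 / p)
    refine ⟨U, fun _ => hU.mono ?_ ?_, fun h => absurd h hp2.ne, fun h => absurd h hp2.not_gt⟩
    · refine Real.rpow_le_rpow_of_exponent_le (Nat.one_le_cast.2 hd) ?_
      have : 1 / 2 ≤ 1 / p := one_div_le_one_div_of_le (by linarith) hp2.le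
      linarith
    · simp
  · obtain ⟨U, hU⟩ := exists_isWCB_two hrank
    exact ⟨U, fun h => absurd h (lt_irrefl 2), fun _ => hU, fun h => absurd h (lt_irrefl 2)⟩
  · obtain ⟨U, hU⟩ := exists_isWCB_rpow hp hrank hd (1 / 2)
    refine ⟨U, fun h => absurd h hp2.not_gt, fun h => absurd h hp2.ne', fun _ => ?_⟩
    rwa [add_comm]
end

section
/- Let Q be an n×d real matrix of full column rank d and let p ∈ [1,∞). Then there exists an invertible d×d real matrix G such that, setting U = QG^{−1}, for all z ∈ ℝ^d one has ‖z‖_2 ≤ ‖Uz‖_p ≤ √d·‖z‖_2. -/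
/-!
Let `N x = ‖Q x‖_p`, a norm on `ℝᵈ` since `Q` is injective. Among the positive semidefinite `A`
with `xᵀ A x ≤ N x ^ 2` for all `x` (the ellipsoids `xᵀ A x ≤ 1` containing the unit ball of `N`),
a compact family, choose one of maximal determinant. If some `v` had `N v ^ 2 > d · vᵀ A v`, take a
functional `u` supporting the unit ball of `N` at `v` (Hahn–Banach). Cauchy–Schwarz for the form
`A` gives `q := uᵀ A⁻¹ u > d`, and by the matrix determinant lemma the admissible matrix
`(1 - t) A + t u uᵀ` has determinant `(1 - t)ᵈ (1 + t q / (1 - t)) det A > det A` for small `t > 0`,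
a contradiction. Hence `vᵀ A v ≤ N v ^ 2 ≤ d · vᵀ A v`, and `G` with `Gᵀ G = A` does the job.
-/

open scoped BigOperators

open Matrix

section LinearAlgebra

variable {ι : Type*} [Fintype ι]

theorem Matrix.mulVec_injective_of_rank_eq_card {m n K : Type*} [Fintype n] [Field K]
    {Q : Matrix m n K} (hQ : Q.rank = Fintype.card n) : Function.Injective Q.mulVec :=
  mulVec_injective_iff.2 <|
    linearIndependent_iff_card_eq_finrank_span.2 (hQ.symm.trans Q.rank_eq_finrank_span_cols)

theorem EuclideanSpace.norm_toLp_sq (y : ι → ℝ) : ‖WithLp.toLp 2 y‖ ^ 2 = y ⬝ᵥ y := by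
  rw [← real_inner_self_eq_norm_sq, EuclideanSpace.inner_eq_star_dotProduct]
  simp

theorem Matrix.dotProduct_mulVec_polarization {A : Matrix ι ι ℝ} (hA : A.IsSymm) (x y : ι → ℝ) :
    4 * (x ⬝ᵥ A *ᵥ y) = (x + y) ⬝ᵥ A *ᵥ (x + y) - (x - y) ⬝ᵥ A *ᵥ (x - y) := by
  have hyx : y ⬝ᵥ A *ᵥ x = x ⬝ᵥ A *ᵥ y := by
    rw [dotProduct_mulVec, ← mulVec_transpose, hA.eq, dotProduct_comm]
  simp only [mulVec_add, mulVec_sub, add_dotProduct, sub_dotProduct, dotProduct_add,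
    dotProduct_sub, hyx]
  ring

theorem Matrix.dotProduct_vecMulVec_self_mulVec (u x : ι → ℝ) :
    x ⬝ᵥ vecMulVec u u *ᵥ x = (u ⬝ᵥ x) ^ 2 := by
  rw [vecMulVec_mulVec, op_smul_eq_smul, dotProduct_smul, smul_eq_mul, dotProduct_comm x, sq]

variable [DecidableEq ι]

/-- Cauchy–Schwarz for the form `A`, applied to `A⁻¹ *ᵥ u` and `v`. -/
theorem Matrix.PosDef.sq_dotProduct_le {A : Matrix ι ι ℝ} (hA : A.PosDef) (u v : ι → ℝ) :
    (u ⬝ᵥ v) ^ 2 ≤ (u ⬝ᵥ A⁻¹ *ᵥ u) * (v ⬝ᵥ A *ᵥ v) := by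
  set w := A⁻¹ *ᵥ u
  have hw : A *ᵥ w = u := by
    rw [mulVec_mulVec, mul_nonsing_inv _ ((isUnit_iff_isUnit_det A).1 hA.isUnit), one_mulVec]
  have hsymm : A.IsSymm := hA.isHermitian
  have key := (toBilin' A).apply_sq_le_of_symm
    (fun x => by simpa [toBilin'_apply'] using hA.posSemidef.dotProduct_mulVec_nonneg x)
    (LinearMap.BilinForm.isSymm_iff.1 (isSymm_toBilin'_iff_isSymm.2 hsymm)) w v
  simp only [toBilin'_apply'] at key
  rwa [dotProduct_mulVec, ← mulVec_transpose, hsymm.eq, hw, dotProduct_comm w] at key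

theorem Matrix.det_one_sub_smul_add_smul_vecMulVec {A : Matrix ι ι ℝ} (hA : IsUnit A.det)
    {t : ℝ} (ht : t ≠ 1) (u : ι → ℝ) :
    ((1 - t) • A + t • vecMulVec u u).det =
      (1 - t) ^ Fintype.card ι * A.det * (1 + t / (1 - t) * (u ⬝ᵥ A⁻¹ *ᵥ u)) := by
  have h1t : 1 - t ≠ 0 := sub_ne_zero.2 (Ne.symm ht)
  have hfactor : (1 - t) • A + t • vecMulVec u u =
      (1 - t) • (A + replicateCol Unit ((t / (1 - t)) • u) * replicateRow Unit u) := by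
    ext i j
    simp [← vecMulVec_eq, vecMulVec_apply]
    field_simp
  rw [hfactor, det_smul, det_add_replicateCol_mul_replicateRow hA, det_unique (n := Unit),
    add_apply, one_apply_eq, Matrix.mul_assoc, ← replicateCol_mulVec,
    replicateRow_mul_replicateCol_apply, mulVec_smul, dotProduct_smul, smul_eq_mul]
  ring

end LinearAlgebra

theorem exists_one_lt_one_sub_pow_mul_one_add_div {d : ℕ} {q : ℝ} (hq : d < q) :
    ∃ t ∈ Set.Ioo (0 : ℝ) 1, 1 < (1 - t) ^ d * (1 + t / (1 - t) * q) := by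
  rcases d with _ | k
  · refine ⟨1 / 2, by norm_num, ?_⟩
    norm_num at hq ⊢
    linarith
  push_cast at hq
  -- By Bernoulli, `(1 - t) ^ k * (1 - t + t * q) ≥ 1 + t * ((q - k - 1) - t * k * (q - 1))`,
  -- and `t * D ≤ q - k - 1` makes the bracket positive.
  set D := k * (q - 1) + 1
  have hD : 0 < D := by nlinarith
  set t := min (1 / 2) ((q - (k + 1)) / D)
  have ht0 : 0 < t := lt_min (by norm_num) (div_pos (by linarith) hD)
  have ht1 : t ≤ 1 / 2 := min_le_left _ _
  have htD : t * D ≤ q - (k + 1) := (le_div_iff₀ hD).1 (min_le_right _ _)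
  refine ⟨t, ⟨ht0, by linarith⟩, ?_⟩
  have hbernoulli : 1 - k * t ≤ (1 - t) ^ k := by
    simpa [sub_eq_add_neg] using one_add_mul_le_pow (a := -t) (by linarith) k
  have hfactor : (1 - t) ^ (k + 1) * (1 + t / (1 - t) * q) = (1 - t) ^ k * (1 - t + t * q) := by
    have h1t : 1 - t ≠ 0 := by linarith
    rw [pow_succ]
    field_simp
  rw [hfactor]
  nlinarith [mul_le_mul_of_nonneg_right hbernoulli (by nlinarith : (0 : ℝ) ≤ 1 - t + t * q),
    mul_pos ht0 ht0]

theorem Seminorm.exists_linearMap_eq_abs_le {E : Type*} [AddCommGroup E] [Module ℝ E]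
    (N : Seminorm ℝ E) (v : E) : ∃ g : E →ₗ[ℝ] ℝ, g v = N v ∧ ∀ x, |g x| ≤ N x := by
  have hker : ∀ c : ℝ, c • v = 0 → c • N v = 0 := fun c hc => by
    rcases smul_eq_zero.1 hc with rfl | rfl <;> simp
  have hfN : ∀ x : (LinearPMap.mkSpanSingleton' (σ := RingHom.id ℝ) v (N v) hker).domain,
      LinearPMap.mkSpanSingleton' (σ := RingHom.id ℝ) v (N v) hker x ≤ N x := by
    rintro ⟨x, hx⟩
    obtain ⟨c, rfl⟩ := Submodule.mem_span_singleton.1 hx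
    rw [LinearPMap.mkSpanSingleton'_apply, map_smul_eq_mul, Real.norm_eq_abs]
    exact mul_le_mul_of_nonneg_right (le_abs_self c) (apply_nonneg N v)
  obtain ⟨g, hgf, hgN⟩ := exists_extension_of_le_sublinear _ N
    (fun c hc x => by rw [map_smul_eq_mul, Real.norm_eq_abs, abs_of_pos hc])
    (map_add_le_add N) hfN
  exact ⟨g, (hgf ⟨v, Submodule.mem_span_singleton_self v⟩).trans
    (LinearPMap.mkSpanSingleton'_apply_self _ _ _ _), N.abs_le_of_le hgN⟩

theorem Seminorm.exists_dotProduct_eq_abs_le {ι : Type*} [Fintype ι] [DecidableEq ι]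
    (N : Seminorm ℝ (ι → ℝ)) (v : ι → ℝ) :
    ∃ u : ι → ℝ, u ⬝ᵥ v = N v ∧ ∀ x, |u ⬝ᵥ x| ≤ N x := by
  obtain ⟨g, hgv, hgN⟩ := N.exists_linearMap_eq_abs_le v
  have hg : ∀ x, (fun i => g fun j => if i = j then 1 else 0) ⬝ᵥ x = g x := fun x => by
    simp [LinearMap.pi_apply_eq_sum_univ g x, dotProduct, mul_comm]
  exact ⟨_, (hg v).trans hgv, fun x => (hg x).symm ▸ hgN x⟩

section Ellipsoids

variable {ι : Type*} [Fintype ι]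

/-- Gram matrices `M` of the possibly degenerate ellipsoids `{x | x ⬝ᵥ M *ᵥ x ≤ 1}` containing
the unit ball of `N`, when `N` is a seminorm. -/
def enclosingEllipsoids (N : (ι → ℝ) → ℝ) : Set (Matrix ι ι ℝ) :=
  {M | M.PosSemidef ∧ ∀ x, x ⬝ᵥ M *ᵥ x ≤ N x ^ 2}

theorem isClosed_enclosingEllipsoids (N : (ι → ℝ) → ℝ) : IsClosed (enclosingEllipsoids N) := by
  have hquad : ∀ x : ι → ℝ, Continuous fun M : Matrix ι ι ℝ => x ⬝ᵥ M *ᵥ x := fun x =>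
    continuous_const.dotProduct (continuous_id.matrix_mulVec continuous_const)
  simp only [enclosingEllipsoids, posSemidef_iff_dotProduct_mulVec, Set.ofPred_and,
    Set.ofPred_forall]
  refine (IsClosed.inter ?_ (isClosed_iInter fun x => isClosed_le continuous_const ?_)).inter
    (isClosed_iInter fun x => isClosed_le (hquad x) continuous_const)
  · exact isClosed_eq continuous_id.matrix_conjTranspose continuous_id
  · simpa using hquad x

theorem one_sub_smul_add_smul_vecMulVec_mem_enclosingEllipsoids {N : (ι → ℝ) → ℝ}
    {A : Matrix ι ι ℝ} (hA : A ∈ enclosingEllipsoids N) {u : ι → ℝ} (hu : ∀ x, |u ⬝ᵥ x| ≤ N x)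
    {t : ℝ} (ht : t ∈ Set.Icc (0 : ℝ) 1) :
    (1 - t) • A + t • vecMulVec u u ∈ enclosingEllipsoids N := by
  obtain ⟨ht0, ht1⟩ := ht
  refine ⟨(hA.1.smul (sub_nonneg.2 ht1)).add ((posSemidef_vecMulVec_self_star u).smul ht0),
    fun x => ?_⟩
  rw [add_mulVec, smul_mulVec, smul_mulVec, dotProduct_add, dotProduct_smul, dotProduct_smul,
    dotProduct_vecMulVec_self_mulVec, smul_eq_mul, smul_eq_mul]
  have h1 := mul_le_mul_of_nonneg_left (hA.2 x) (sub_nonneg.2 ht1)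
  have h2 := mul_le_mul_of_nonneg_left (sq_le_sq' (abs_le.1 (hu x)).1 (abs_le.1 (hu x)).2) ht0
  linarith

variable [DecidableEq ι]

theorem apply_mem_Icc_of_mem_enclosingEllipsoids {N : (ι → ℝ) → ℝ} {M : Matrix ι ι ℝ}
    (hM : M ∈ enclosingEllipsoids N) (i j : ι) :
    M i j ∈ Set.Icc (-(N (Pi.single i 1 - Pi.single j 1) ^ 2 / 4))
      (N (Pi.single i 1 + Pi.single j 1) ^ 2 / 4) := by
  have hsymm : M.IsSymm := hM.1.isHermitian
  have h := dotProduct_mulVec_polarization hsymm (Pi.single i 1) (Pi.single j 1)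
  rw [mulVec_single_one, single_one_dotProduct, col_apply] at h
  have hp := hM.1.dotProduct_mulVec_nonneg (Pi.single i 1 + Pi.single j 1)
  have hm := hM.1.dotProduct_mulVec_nonneg (Pi.single i 1 - Pi.single j 1)
  simp only [star_trivial] at hp hm
  have := hM.2 (Pi.single i 1 + Pi.single j 1)
  have := hM.2 (Pi.single i 1 - Pi.single j 1)
  constructor <;> linarith

theorem isCompact_enclosingEllipsoids (N : (ι → ℝ) → ℝ) :
    IsCompact (enclosingEllipsoids N) :=
  (isCompact_univ_pi fun _ => isCompact_univ_pi fun _ => isCompact_Icc).of_isClosed_subset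
    (isClosed_enclosingEllipsoids N) fun _ hM =>
      Set.mem_univ_pi.2 fun i => Set.mem_univ_pi.2 fun j =>
        apply_mem_Icc_of_mem_enclosingEllipsoids hM i j

theorem sq_le_card_mul_of_isMaxOn_det (N : Seminorm ℝ (ι → ℝ)) {A : Matrix ι ι ℝ}
    (hA : A ∈ enclosingEllipsoids N) (hmax : IsMaxOn det (enclosingEllipsoids N) A)
    (hdet : 0 < A.det) (v : ι → ℝ) : N v ^ 2 ≤ Fintype.card ι * (v ⬝ᵥ A *ᵥ v) := by
  by_contra! hv
  obtain ⟨u, huv, hu⟩ := N.exists_dotProduct_eq_abs_le v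
  have hcs : N v ^ 2 ≤ (u ⬝ᵥ A⁻¹ *ᵥ u) * (v ⬝ᵥ A *ᵥ v) :=
    huv ▸ (hA.1.posDef_iff_det_ne_zero.2 hdet.ne').sq_dotProduct_le u v
  have hvA : 0 ≤ v ⬝ᵥ A *ᵥ v := by simpa using hA.1.dotProduct_mulVec_nonneg v
  have hq : (Fintype.card ι : ℝ) < u ⬝ᵥ A⁻¹ *ᵥ u := by
    by_contra! hq
    linarith [mul_le_mul_of_nonneg_right hq hvA]
  obtain ⟨t, ⟨ht0, ht1⟩, hgrowth⟩ := exists_one_lt_one_sub_pow_mul_one_add_div hq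
  have hle := isMaxOn_iff.1 hmax _
    (one_sub_smul_add_smul_vecMulVec_mem_enclosingEllipsoids hA hu ⟨ht0.le, ht1.le⟩)
  rw [det_one_sub_smul_add_smul_vecMulVec (isUnit_iff_ne_zero.2 hdet.ne') ht1.ne,
    mul_right_comm] at hle
  exact (lt_mul_of_one_lt_left hdet hgrowth).not_ge hle

theorem Seminorm.exists_posDef_dotProduct_mulVec_le_sq_le_card_mul (N : Seminorm ℝ (ι → ℝ))
    {c : ℝ} (hc : 0 < c) (hN : ∀ x, c * (x ⬝ᵥ x) ≤ N x ^ 2) :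
    ∃ A : Matrix ι ι ℝ, A.PosDef ∧
      ∀ x, x ⬝ᵥ A *ᵥ x ≤ N x ^ 2 ∧ N x ^ 2 ≤ Fintype.card ι * (x ⬝ᵥ A *ᵥ x) := by
  have hc1 : c • (1 : Matrix ι ι ℝ) ∈ enclosingEllipsoids N :=
    ⟨PosSemidef.one.smul hc.le, fun x => by simpa [smul_mulVec] using hN x⟩
  obtain ⟨A, hA, hmax⟩ := (isCompact_enclosingEllipsoids N).exists_isMaxOn ⟨_, hc1⟩
    continuous_id.matrix_det.continuousOn
  have hdet : 0 < A.det :=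
    (show 0 < (c • (1 : Matrix ι ι ℝ)).det by simpa [det_smul] using pow_pos hc _).trans_le
      (isMaxOn_iff.1 hmax _ hc1)
  exact ⟨A, hA.1.posDef_iff_det_ne_zero.2 hdet.ne',
    fun x => ⟨hA.2 x, sq_le_card_mul_of_isMaxOn_det N hA hmax hdet x⟩⟩

end Ellipsoids

open scoped MatrixOrder in
theorem LinearMap.exists_isUnit_norm_toLp_le_norm_le_sqrt_card_mul {ι F : Type*} [Fintype ι]
    [DecidableEq ι] [NormedAddCommGroup F] [NormedSpace ℝ F] (f : (ι → ℝ) →ₗ[ℝ] F)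
    (hf : Function.Injective f) :
    ∃ G : Matrix ι ι ℝ, IsUnit G ∧ ∀ x, ‖WithLp.toLp 2 (G *ᵥ x)‖ ≤ ‖f x‖ ∧
      ‖f x‖ ≤ √(Fintype.card ι) * ‖WithLp.toLp 2 (G *ᵥ x)‖ := by
  obtain ⟨K, hK0, hK⟩ :=
    (f ∘ₗ (WithLp.linearEquiv 2 ℝ (ι → ℝ)).toLinearMap).injective_iff_antilipschitz.1
      (hf.comp (WithLp.linearEquiv 2 ℝ (ι → ℝ)).injective)
  have hlower : ∀ x, ((K : ℝ) ^ 2)⁻¹ * (x ⬝ᵥ x) ≤ ((normSeminorm ℝ F).comp f) x ^ 2 := fun x => by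
    have hx : ‖WithLp.toLp 2 x‖ ≤ K * ‖f x‖ := by
      simpa using ZeroHomClass.bound_of_antilipschitz _ hK (WithLp.toLp 2 x)
    rw [← EuclideanSpace.norm_toLp_sq, inv_mul_le_iff₀ (by positivity), Seminorm.comp_apply,
      coe_normSeminorm, ← mul_pow]
    exact pow_le_pow_left₀ (norm_nonneg _) hx 2
  obtain ⟨A, hA, hAN⟩ :=
    ((normSeminorm ℝ F).comp f).exists_posDef_dotProduct_mulVec_le_sq_le_card_mul
      (by positivity) hlower
  obtain ⟨G, rfl⟩ := CStarAlgebra.nonneg_iff_eq_star_mul_self.1 hA.posSemidef.nonneg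
  have hG : ∀ x, x ⬝ᵥ (star G * G) *ᵥ x = ‖WithLp.toLp 2 (G *ᵥ x)‖ ^ 2 := fun x => by
    rw [EuclideanSpace.norm_toLp_sq, ← mulVec_mulVec, star_eq_conjTranspose,
      conjTranspose_eq_transpose_of_trivial, dotProduct_mulVec, vecMul_transpose, dotProduct_comm]
  have hGdet : IsUnit (star G * G).det := (Matrix.isUnit_iff_isUnit_det (star G * G)).1 hA.isUnit
  rw [det_mul] at hGdet
  refine ⟨G, (Matrix.isUnit_iff_isUnit_det G).2 (isUnit_of_mul_isUnit_right hGdet), fun x => ?_⟩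
  obtain ⟨hle, hge⟩ := hAN x
  simp only [hG, Seminorm.comp_apply, coe_normSeminorm] at hle hge
  refine ⟨(pow_le_pow_iff_left₀ (norm_nonneg _) (norm_nonneg _) two_ne_zero).1 hle,
    (pow_le_pow_iff_left₀ (norm_nonneg _) (by positivity) two_ne_zero).1 ?_⟩
  rwa [mul_pow, Real.sq_sqrt (Nat.cast_nonneg _)]

theorem pnorm_toReal_eq_norm_toLp {p : ENNReal} (hp : 0 < p.toReal) {n : ℕ} (v : Fin n → ℝ) :
    pnorm p.toReal v = ‖WithLp.toLp p v‖ := by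
  rw [PiLp.norm_eq_sum hp]
  simp [pnorm, Real.norm_eq_abs]

/-- **Löwner–John step of the well-conditioned-basis construction.**
Let `Q` be an `n × d` real matrix of full column rank `d` and `p ∈ [1, ∞)`.  Then there is an
invertible `d × d` matrix `G` such that, with `U = Q * G⁻¹`, for all `z ∈ ℝᵈ` one has
`‖z‖₂ ≤ ‖U z‖_p ≤ √d · ‖z‖₂`. -/
theorem lowner_john_basis {n d : ℕ} (Q : Matrix (Fin n) (Fin d) ℝ) (p : ℝ)
    (hp : 1 ≤ p) (hQ : Q.rank = d) :
    ∃ G : Matrix (Fin d) (Fin d) ℝ, IsUnit G ∧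
      ∀ z : Fin d → ℝ,
        pnorm 2 z ≤ pnorm p ((Q * G⁻¹).mulVec z) ∧
        pnorm p ((Q * G⁻¹).mulVec z) ≤ Real.sqrt d * pnorm 2 z := by
  have : Fact (1 ≤ ENNReal.ofReal p) := ⟨ENNReal.one_le_ofReal.2 hp⟩
  have hQinj : Function.Injective Q.mulVec :=
    mulVec_injective_of_rank_eq_card (hQ.trans (Fintype.card_fin d).symm)
  obtain ⟨G, hG, hGQ⟩ := LinearMap.exists_isUnit_norm_toLp_le_norm_le_sqrt_card_mul
    ((WithLp.linearEquiv (ENNReal.ofReal p) ℝ (Fin n → ℝ)).symm.toLinearMap ∘ₗ Q.mulVecLin)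
    ((WithLp.linearEquiv _ ℝ _).symm.injective.comp hQinj)
  refine ⟨G, hG, fun z => ?_⟩
  have hz : G *ᵥ (G⁻¹ *ᵥ z) = z := by
    rw [mulVec_mulVec, mul_nonsing_inv _ ((isUnit_iff_isUnit_det G).1 hG), one_mulVec]
  have hp0 : 0 < p := by linarith
  have h2 := pnorm_toReal_eq_norm_toLp (p := 2) (by norm_num) z
  have hpz := pnorm_toReal_eq_norm_toLp (p := ENNReal.ofReal p)
    (by rwa [ENNReal.toReal_ofReal hp0.le]) ((Q * G⁻¹) *ᵥ z)
  rw [ENNReal.toReal_ofNat] at h2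
  rw [ENNReal.toReal_ofReal hp0.le] at hpz
  rw [h2, hpz, ← mulVec_mulVec]
  simpa [hz] using hGQ (G⁻¹ *ᵥ z)
end

section
/- Let A be an n×d real matrix of rank d and p ∈ [1,∞). Suppose A = Uτ, where τ is an invertible d×d matrix and U is an n×d matrix whose columns form an Auerbach basis for the column space of A with respect to ‖·‖_p, i.e., ‖U^{(j)}‖_p = 1 for every column j, and for every ν ∈ ℝ^d with ‖Uν‖_p ≤ 1 one has |ν_j| ≤ 1 for all j. Then the columns of τ^{−1} form an exact barycentric spanner for D = {z ∈ ℝ^d : ‖Az‖_p ≤ 1}: every column of τ^{−1} belongs to D, and every z ∈ D can be written as z = τ^{−1}ν with ‖ν‖_∞ ≤ 1. -/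
open scoped BigOperators

namespace Matrix

variable {m n : Type*} [Fintype n] [DecidableEq n] {R : Type*} [CommRing R]

lemma mulVec_col_nonsing_inv_of_eq_mul {A U : Matrix m n R} {τ : Matrix n n R}
    (hA : A = U * τ) (hτ : IsUnit τ) (j : n) :
    A *ᵥ (fun i => τ⁻¹ i j) = fun i => U i j := by
  change A *ᵥ τ⁻¹.col j = U.col j
  rw [← mulVec_single_one, mulVec_mulVec, hA,
    mul_nonsing_inv_cancel_right _ _ ((isUnit_iff_isUnit_det τ).mp hτ), mulVec_single_one]

lemma eq_nonsing_inv_mulVec_mulVec {τ : Matrix n n R} (hτ : IsUnit τ) (z : n → R) :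
    z = τ⁻¹ *ᵥ (τ *ᵥ z) := by
  rw [mulVec_mulVec, nonsing_inv_mul τ ((isUnit_iff_isUnit_det τ).mp hτ), one_mulVec]

end Matrix

theorem auerbach_exact_barycentric_spanner_general {n d : ℕ} (A : Matrix (Fin n) (Fin d) ℝ)
    (U : Matrix (Fin n) (Fin d) ℝ) (τ : Matrix (Fin d) (Fin d) ℝ) (p : ℝ)
    (hA : A = U * τ) (hτ : IsUnit τ)
    (hUnit : ∀ j : Fin d, pnorm p (fun i => U i j) = 1)
    (hAuerbach : ∀ ν : Fin d → ℝ, pnorm p (U.mulVec ν) ≤ 1 → ∀ j, |ν j| ≤ 1) :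
    (∀ j : Fin d, pnorm p (A.mulVec (fun i => τ⁻¹ i j)) ≤ 1) ∧
    (∀ z : Fin d → ℝ, pnorm p (A.mulVec z) ≤ 1 →
      ∃ ν : Fin d → ℝ, z = τ⁻¹.mulVec ν ∧ ∀ j, |ν j| ≤ 1) := by
  refine ⟨fun j => ?_, fun z hz => ⟨τ.mulVec z, Matrix.eq_nonsing_inv_mulVec_mulVec hτ z, ?_⟩⟩
  · rw [Matrix.mulVec_col_nonsing_inv_of_eq_mul hA hτ j, hUnit j]
  · exact hAuerbach _ (by rwa [Matrix.mulVec_mulVec, ← hA])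

/-- **Auerbach bases give exact barycentric spanners.**
Suppose `A = U * τ` with `τ` invertible, where `A` is an `n × d` matrix of rank `d`,
`p ∈ [1, ∞)`, and the columns of `U` form an Auerbach basis for the column space of `A`
w.r.t. `‖·‖_p` (each column has unit `p`-norm, and `‖U ν‖_p ≤ 1` implies `|ν_j| ≤ 1` for
all `j`).  Then the columns of `τ⁻¹` form an exact barycentric spanner for
`D = {z : ‖A z‖_p ≤ 1}`: every column of `τ⁻¹` lies in `D`, and every `z ∈ D` can be written
as `z = τ⁻¹ ν` with `‖ν‖_∞ ≤ 1`. -/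
theorem auerbach_exact_barycentric_spanner {n d : ℕ} (A : Matrix (Fin n) (Fin d) ℝ)
    (U : Matrix (Fin n) (Fin d) ℝ) (τ : Matrix (Fin d) (Fin d) ℝ) (p : ℝ)
    (hp : 1 ≤ p) (hrank : A.rank = d) (hA : A = U * τ) (hτ : IsUnit τ)
    (hUnit : ∀ j : Fin d, pnorm p (fun i => U i j) = 1)
    (hAuerbach : ∀ ν : Fin d → ℝ, pnorm p (U.mulVec ν) ≤ 1 → ∀ j, |ν j| ≤ 1) :
    (∀ j : Fin d, pnorm p (A.mulVec (fun i => τ⁻¹ i j)) ≤ 1) ∧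
    (∀ z : Fin d → ℝ, pnorm p (A.mulVec z) ≤ 1 →
      ∃ ν : Fin d → ℝ, z = τ⁻¹.mulVec ν ∧ ∀ j, |ν j| ≤ 1) :=
  auerbach_exact_barycentric_spanner_general A U τ p hA hτ hUnit hAuerbach
end

section
/- (ε-net extension.) Let A be an n×m real matrix, p ∈ [1,∞), 0 < ε ≤ 1/7, and let S be any real matrix with n columns. Let B = {Ax : x ∈ ℝ^m, ‖Ax‖_p ≤ 1} and let N ⊆ B be an (ε/4)-net of B, i.e., for every y ∈ B there exists y' ∈ N with ‖y − y'‖_p ≤ ε/4. Suppose that for every y' ∈ N one has |‖Sy'‖_p − ‖y'‖_p| ≤ (ε/4)·‖y'‖_p. Then for every x ∈ ℝ^m: |‖SAx‖_p − ‖Ax‖_p| ≤ ε·‖Ax‖_p. -/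
/-!
The claim is a statement about the linear map `S` restricted to the subspace `V = range A` of
`ℓ^p(Fin n)`. Write `t = ε/4` and let `M` be the operator norm of `S` on `V`. For a unit vector
`y ∈ V` pick `y' ∈ N` with `‖y - y'‖ ≤ t`; then `‖S y‖ ≤ ‖S y'‖ + ‖S (y - y')‖ ≤ (1 + t) + t M`,
so `M ≤ (1 + t)/(1 - t) ≤ 2`. With this bound on `M`, the same decomposition gives
`|‖S y‖ - 1| ≤ 2t + t + t = ε`, and homogeneity extends this from the unit sphere to all of `V`.
-/

open scoped BigOperators

section NetExtension

variable {E F : Type*} [NormedAddCommGroup E] [NormedSpace ℝ E] [NormedAddCommGroup F]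
  [NormedSpace ℝ F] {T : E →L[ℝ] F} {V : Submodule ℝ E} {N : Set E} {t : ℝ}

theorem opNorm_comp_subtypeL_le_of_net (hNV : ∀ y ∈ N, y ∈ V ∧ ‖y‖ ≤ 1)
    (hnet : ∀ y ∈ V, ‖y‖ ≤ 1 → ∃ y' ∈ N, ‖y - y'‖ ≤ t)
    (hT : ∀ y' ∈ N, ‖T y'‖ ≤ (1 + t) * ‖y'‖) (ht0 : 0 ≤ t) (ht1 : t < 1) :
    ‖T ∘L V.subtypeL‖ ≤ (1 + t) / (1 - t) := by
  set M := ‖T ∘L V.subtypeL‖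
  have hM : M ≤ 1 + t + t * M := by
    refine ContinuousLinearMap.opNorm_le_of_unit_norm (by positivity) ?_
    rintro ⟨y, hyV⟩ hy
    obtain ⟨y', hy'N, hyy'⟩ := hnet y hyV hy.le
    obtain ⟨hy'V, hy'1⟩ := hNV y' hy'N
    have hdiff : ‖T (y - y')‖ ≤ M * ‖y - y'‖ :=
      (T ∘L V.subtypeL).le_opNorm ⟨y - y', V.sub_mem hyV hy'V⟩
    calc ‖T y‖ = ‖T y' + T (y - y')‖ := by rw [map_sub, add_sub_cancel]
      _ ≤ ‖T y'‖ + ‖T (y - y')‖ := norm_add_le _ _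
      _ ≤ (1 + t) * 1 + M * t := by
        gcongr
        · exact (hT y' hy'N).trans (by gcongr)
        · exact hdiff.trans (by gcongr)
      _ = 1 + t + t * M := by ring
  rw [le_div_iff₀ (by linarith)]
  linarith

theorem abs_norm_sub_norm_le_of_unit_sphere {c : ℝ}
    (h : ∀ y ∈ V, ‖y‖ = 1 → |‖T y‖ - 1| ≤ c) : ∀ y ∈ V, |‖T y‖ - ‖y‖| ≤ c * ‖y‖ := by
  intro y hyV
  rcases eq_or_ne y 0 with rfl | hy0
  · simp
  have hy : 0 < ‖y‖ := norm_pos_iff.2 hy0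
  have hu := h (‖y‖⁻¹ • y) (V.smul_mem _ hyV) (norm_smul_inv_norm hy0)
  rw [map_smul, norm_smul, norm_inv, norm_norm] at hu
  calc |‖T y‖ - ‖y‖| = ‖y‖ * |‖y‖⁻¹ * ‖T y‖ - 1| := by
        rw [← abs_of_pos hy, ← abs_mul, abs_of_pos hy, mul_sub, mul_inv_cancel_left₀ hy.ne',
          mul_one]
    _ ≤ c * ‖y‖ := by rw [mul_comm]; gcongr

theorem abs_norm_sub_norm_le_of_net (hNV : ∀ y ∈ N, y ∈ V ∧ ‖y‖ ≤ 1)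
    (hnet : ∀ y ∈ V, ‖y‖ ≤ 1 → ∃ y' ∈ N, ‖y - y'‖ ≤ t)
    (hT : ∀ y' ∈ N, |‖T y'‖ - ‖y'‖| ≤ t * ‖y'‖) (ht0 : 0 ≤ t) (ht : t ≤ 1 / 3) :
    ∀ y ∈ V, |‖T y‖ - ‖y‖| ≤ 4 * t * ‖y‖ := by
  have hM : ‖T ∘L V.subtypeL‖ ≤ 2 := by
    refine (opNorm_comp_subtypeL_le_of_net hNV hnet
      (fun y' hy' => by linarith [(abs_le.1 (hT y' hy')).2]) ht0 (by linarith)).trans ?_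
    rw [div_le_iff₀ (by linarith)]
    linarith
  refine abs_norm_sub_norm_le_of_unit_sphere fun y hyV hy => ?_
  obtain ⟨y', hy'N, hyy'⟩ := hnet y hyV hy.le
  obtain ⟨hy'V, hy'1⟩ := hNV y' hy'N
  have hTyy' : |‖T y‖ - ‖T y'‖| ≤ 2 * t :=
    calc |‖T y‖ - ‖T y'‖| ≤ ‖T (y - y')‖ := by rw [map_sub]; exact abs_norm_sub_norm_le _ _
      _ ≤ ‖T ∘L V.subtypeL‖ * ‖y - y'‖ :=
        (T ∘L V.subtypeL).le_opNorm ⟨y - y', V.sub_mem hyV hy'V⟩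
      _ ≤ 2 * t := by gcongr
  have hTy' : |‖T y'‖ - ‖y'‖| ≤ t := (hT y' hy'N).trans (mul_le_of_le_one_right ht0 hy'1)
  have hy' : |‖y'‖ - 1| ≤ t := by
    rw [← hy]
    exact (abs_norm_sub_norm_le _ _).trans (by rwa [norm_sub_rev])
  linarith [abs_sub_le ‖T y‖ ‖T y'‖ 1, abs_sub_le ‖T y'‖ ‖y'‖ 1]

end NetExtension

theorem pnorm_eq_norm_toLp {p : ℝ} (hp : 0 < p) {n : ℕ} (v : Fin n → ℝ) :
    pnorm p v = ‖WithLp.toLp (ENNReal.ofReal p) v‖ := by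
  have hq : (ENNReal.ofReal p).toReal = p := ENNReal.toReal_ofReal hp.le
  rw [PiLp.norm_eq_sum (by rwa [hq]), hq]
  simp [pnorm]

/-- **ε-net extension step.**
Let `A` be `n × m`, `p ∈ [1, ∞)`, `0 < ε ≤ 1/7`, and let `S` be any real matrix with `n`
columns.  Let `B = {A x : ‖A x‖_p ≤ 1}` and let `N ⊆ B` be an `ε/4`-net of `B`.  If
`|‖S y'‖_p - ‖y'‖_p| ≤ (ε/4) ‖y'‖_p` for every `y' ∈ N`, then for every `x ∈ ℝᵐ`,
`|‖S A x‖_p - ‖A x‖_p| ≤ ε ‖A x‖_p`. -/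
theorem eps_net_extension {n m k : ℕ} (A : Matrix (Fin n) (Fin m) ℝ)
    (S : Matrix (Fin k) (Fin n) ℝ) (p ε : ℝ) (N : Set (Fin n → ℝ))
    (hp : 1 ≤ p) (hε : 0 < ε) (hε' : ε ≤ 1 / 7)
    (hNB : ∀ y ∈ N, ∃ x : Fin m → ℝ, y = A.mulVec x ∧ pnorm p y ≤ 1)
    (hnet : ∀ x : Fin m → ℝ, pnorm p (A.mulVec x) ≤ 1 →
      ∃ y' ∈ N, pnorm p (A.mulVec x - y') ≤ ε / 4)
    (hS : ∀ y' ∈ N, |pnorm p (S.mulVec y') - pnorm p y'| ≤ (ε / 4) * pnorm p y') :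
    ∀ x : Fin m → ℝ,
      |pnorm p (S.mulVec (A.mulVec x)) - pnorm p (A.mulVec x)|
        ≤ ε * pnorm p (A.mulVec x) := by
  intro x
  set q := ENNReal.ofReal p
  have : Fact (1 ≤ q) := ⟨ENNReal.one_le_ofReal.2 hp⟩
  have hnorm : ∀ {d : ℕ} (v : Fin d → ℝ), pnorm p v = ‖WithLp.toLp q v‖ :=
    pnorm_eq_norm_toLp (by linarith)
  simp only [hnorm] at hNB hnet hS ⊢
  have key := abs_norm_sub_norm_le_of_net
    (T := LinearMap.toContinuousLinearMap (Matrix.toLpLin q q S))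
    (V := LinearMap.range (Matrix.toLpLin q q A)) (N := WithLp.ofLp ⁻¹' N) (t := ε / 4)
    ?_ ?_ ?_ (by positivity) (by linarith) (WithLp.toLp q (A.mulVec x)) ⟨WithLp.toLp q x, rfl⟩
  · rwa [show 4 * (ε / 4) = ε by ring] at key
  · intro y hy
    obtain ⟨x, hx, hy1⟩ := hNB _ hy
    exact ⟨⟨WithLp.toLp q x, by rw [Matrix.toLpLin_apply, ← hx]⟩, hy1⟩
  · rintro _ ⟨x, rfl⟩ hx
    obtain ⟨y', hy', hxy'⟩ := hnet (WithLp.ofLp x) hx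
    exact ⟨WithLp.toLp q y', hy', by simpa [Matrix.toLpLin_apply] using hxy'⟩
  · intro y hy
    simpa [Matrix.toLpLin_apply] using hS _ hy
end
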